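/- arXiv:1812.05128 — 3 statements merged into one kernel-verified Lean document; each statement's English description precedes it below -/
import Mathlib

section
/- If X is an ℝ^d-valued Lévy process in a filtration F (no killing, ζ = ∞), and e is an exponentially distributed random variable with strictly positive mean, independent of F_∞, then the process k_e(X), equal to X on [0, e) and to ∂ on [e, ∞), is a possibly killed Lévy process in the progressive enlargement of F by e (the smallest enlargement of F making e a stopping time). -/
/-! Before the independent exponential time `e`, an event of the progressive enlargement at time
`s` coincides with an `F s`-event `B`. Independence of `e` from `F_∞` then factors the increment
integral over `[s, t]` as `P(t < e) P(B) E g(X (t - s))`, and the memoryless identity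
`P(t < e) = P(s < e) P(t - s < e)` regroups it into `P(B ∩ {s < e}) E[g(X (t - s)); t - s < e]`.
The path properties hold since the killed path agrees with `X` on `[0, e)` and its lifetime is
exactly `e`. -/
open MeasureTheory ProbabilityTheory Filter Set
open scoped NNReal ENNReal

noncomputable section

instance optMS {α : Type*} [MeasurableSpace α] : MeasurableSpace (Option α) :=
  MeasurableSpace.comap (fun o => o.elim (Sum.inl ()) Sum.inr) inferInstance

variable {Ω : Type*} {mΩ : MeasurableSpace Ω} {d : ℕ}

/-- Extend a nonnegative Borel function `g` on `ℝ^d` by `0` at the cemetery `∂ = none`. -/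
def kval (g : (Fin d → ℝ) → ℝ≥0∞) : Option (Fin d → ℝ) → ℝ≥0∞ := fun x => x.elim 0 g

/-- Difference in `ℝ^d ∪ {∂}`, with the convention `∂ ± x = x ± ∂ = ∂`. -/
def osub : Option (Fin d → ℝ) → Option (Fin d → ℝ) → Option (Fin d → ℝ)
  | some a, some b => some (a - b)
  | _, _ => none

/-- Sum in `ℝ^d ∪ {∂}`, with the convention `∂ ± x = x ± ∂ = ∂`. -/
def oadd : Option (Fin d → ℝ) → Option (Fin d → ℝ) → Option (Fin d → ℝ)
  | some a, some b => some (a + b)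
  | _, _ => none

/-- The lifetime `ζ := inf {t > 0 : X t = ∂}` (`= ∞` if the set is empty). -/
def lifetime (X : ℝ≥0 → Ω → Option (Fin d → ℝ)) (ω : Ω) : ℝ≥0∞ :=
  sInf ((fun s : ℝ≥0 => (s : ℝ≥0∞)) '' {s : ℝ≥0 | 0 < s ∧ X s ω = none})

/-- The `ℝ^d`-valued path of `X`, read as `0` at the cemetery (used only to express
path regularity on `[0, ζ)`). -/
def pkPath (X : ℝ≥0 → Ω → Option (Fin d → ℝ)) (ω : Ω) (t : ℝ≥0) : Fin d → ℝ :=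
  (X t ω).getD 0

/-- A possibly killed `ℝ^d`-valued Lévy process `X` in the filtration `F` under `P`. -/
structure IsPKLevy (P : Measure Ω) (F : Filtration ℝ≥0 mΩ)
    (X : ℝ≥0 → Ω → Option (Fin d → ℝ)) : Prop where
  adapted : ∀ t, Measurable[F t] (X t)
  dead : ∀ ω, ∀ t : ℝ≥0, lifetime X ω ≤ t → X t ω = none
  rightCont : ∀ ω, ∀ t : ℝ≥0, (t : ℝ≥0∞) < lifetime X ω →
    ContinuousWithinAt (pkPath X ω) (Set.Ici t) t
  leftLim : ∀ ω, ∀ t : ℝ≥0, 0 < t → (t : ℝ≥0∞) ≤ lifetime X ω →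
    ∃ l, Tendsto (pkPath X ω) (nhdsWithin t (Set.Iio t)) (nhds l)
  init : ∀ᵐ ω ∂P, X 0 ω = some 0
  alive : ∀ᵐ ω ∂P, 0 < lifetime X ω
  increments : ∀ s t : ℝ≥0, s ≤ t → ∀ g : (Fin d → ℝ) → ℝ≥0∞, Measurable g →
    ∀ A : Set Ω, MeasurableSet[F s] A →
      ∫⁻ ω in A, kval g (osub (X t ω) (X s ω)) ∂P
        = P (A ∩ {ω | (s : ℝ≥0∞) < lifetime X ω}) * ∫⁻ ω, kval g (X (t - s) ω) ∂P

/-- An `[0,∞]`-valued stopping time of the filtration `F`. -/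
def IsStoppingTimeE (F : Filtration ℝ≥0 mΩ) (T : Ω → ℝ≥0∞) : Prop :=
  ∀ t : ℝ≥0, MeasurableSet[F t] {ω | T ω ≤ (t : ℝ≥0∞)}

/-- The law of `X` observed on the random interval `[0, T] ∩ [0, ∞)`: outside the interval
the observed process is set to the adjoined state `↑` (the outer `none`). -/
def restLawIcc (P : Measure Ω) (X : ℝ≥0 → Ω → Option (Fin d → ℝ)) (T : Ω → ℝ≥0∞) :
    Measure (ℝ≥0 → Option (Option (Fin d → ℝ))) :=
  Measure.map (fun ω t => if (t : ℝ≥0∞) ≤ T ω then some (X t ω) else none) P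

/-- The law of `X` observed on the random interval `[0, T)`. -/
def restLawIco (P : Measure Ω) (X : ℝ≥0 → Ω → Option (Fin d → ℝ)) (T : Ω → ℝ≥0∞) :
    Measure (ℝ≥0 → Option (Option (Fin d → ℝ))) :=
  Measure.map (fun ω t => if (t : ℝ≥0∞) < T ω then some (X t ω) else none) P

/-- The law of the process `X` under `P`. -/
def pkLaw (P : Measure Ω) (X : ℝ≥0 → Ω → Option (Fin d → ℝ)) :
    Measure (ℝ≥0 → Option (Fin d → ℝ)) :=
  Measure.map (fun ω t => X t ω) P

/-- An (unkilled) Lévy process with values in a normed abelian group `V`. -/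
structure IsLevy {V : Type*} [NormedAddCommGroup V] [MeasurableSpace V]
    (P : Measure Ω) (F : Filtration ℝ≥0 mΩ) (X : ℝ≥0 → Ω → V) : Prop where
  adapted : ∀ t, Measurable[F t] (X t)
  rightCont : ∀ ω, ∀ t : ℝ≥0, ContinuousWithinAt (fun s => X s ω) (Set.Ici t) t
  leftLim : ∀ ω, ∀ t : ℝ≥0, 0 < t → ∃ l, Tendsto (fun s => X s ω) (nhdsWithin t (Set.Iio t)) (nhds l)
  init : ∀ᵐ ω ∂P, X 0 ω = 0
  increments : ∀ s t : ℝ≥0, s ≤ t → ∀ g : V → ℝ≥0∞, Measurable g →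
    ∀ A : Set Ω, MeasurableSet[F s] A →
      ∫⁻ ω in A, g (X t ω - X s ω) ∂P = P A * ∫⁻ ω, g (X (t - s) ω) ∂P
theorem measurable_optionSome {α : Type*} [MeasurableSpace α] :
    Measurable (Option.some : α → Option α) := by
  rintro _ ⟨s, hs, rfl⟩
  exact measurable_inr hs

theorem ProbabilityTheory.Indep.setLIntegral_eq_mul {μ : Measure Ω} {m₁ m₂ : MeasurableSpace Ω}
    (h₁ : m₁ ≤ mΩ) (h₂ : m₂ ≤ mΩ) (hind : Indep m₁ m₂ μ) {C : Set Ω} (hC : MeasurableSet[m₁] C)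
    {f : Ω → ℝ≥0∞} (hf : Measurable[m₂] f) :
    ∫⁻ ω in C, f ω ∂μ = μ C * ∫⁻ ω, f ω ∂μ := by
  have hC' : MeasurableSet[mΩ] C := h₁ _ hC
  have hind_one : Measurable[m₁] (C.indicator fun _ => (1 : ℝ≥0∞)) :=
    (measurable_const : Measurable[m₁] fun _ : Ω => (1 : ℝ≥0∞)).indicator hC
  calc ∫⁻ ω in C, f ω ∂μ = ∫⁻ ω, C.indicator (fun _ => 1) ω * f ω ∂μ := by
        rw [← lintegral_indicator hC']
        congr 1 with ω
        by_cases hω : ω ∈ C <;> simp [hω]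
    _ = μ C * ∫⁻ ω, f ω ∂μ := by
        rw [lintegral_mul_eq_lintegral_mul_lintegral_of_independent_measurableSpace h₁ h₂ hind
          hind_one hf, lintegral_indicator_const hC', one_mul]

theorem Set.inter_eq_inter_of_subset {α : Type*} {A B C D : Set α} (hCD : C ⊆ D)
    (h : A ∩ D = B ∩ D) : A ∩ C = B ∩ C := by
  rw [← inter_eq_right.2 hCD, ← inter_assoc, h, inter_assoc]

theorem measure_gt_eq_mul_of_exponential {P : Measure Ω} {e : Ω → ℝ≥0} {r : ℝ≥0}
    (hre : ∀ t : ℝ≥0, P {ω | t < e ω} = ENNReal.ofReal (Real.exp (-((r : ℝ) * t))))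
    {s t : ℝ≥0} (hst : s ≤ t) :
    P {ω | t < e ω} = P {ω | s < e ω} * P {ω | t - s < e ω} := by
  rw [hre, hre, hre, ← ENNReal.ofReal_mul (Real.exp_nonneg _), ← Real.exp_add,
    NNReal.coe_sub hst]
  congr 3
  ring

/-- It contains `F` and makes `e` a stopping time, so by minimality it contains the progressive
enlargement of `F` by `e`. -/
def MeasureTheory.Filtration.enlargementBefore (F : Filtration ℝ≥0 mΩ) (e : Ω → ℝ≥0) :
    Filtration ℝ≥0 mΩ where
  seq t :=
    { MeasurableSet' := fun A => MeasurableSet A ∧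
        ∃ B, MeasurableSet[F t] B ∧ A ∩ {ω | t < e ω} = B ∩ {ω | t < e ω}
      measurableSet_empty := ⟨.empty, ∅, @MeasurableSet.empty _ (F t), rfl⟩
      measurableSet_compl := by
        rintro A ⟨hA, B, hB, hAB⟩
        refine ⟨hA.compl, Bᶜ, hB.compl, ?_⟩
        rw [← sdiff_eq_compl_inter, ← sdiff_eq_compl_inter, ← sdiff_inter_self_eq_sdiff, hAB,
          sdiff_inter_self_eq_sdiff]
      measurableSet_iUnion := by
        intro A hA
        choose hAm B hB hAB using hA
        exact ⟨.iUnion hAm, ⋃ i, B i, .iUnion hB, by simp only [iUnion_inter, hAB]⟩ }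
  mono' s t hst A := by
    rintro ⟨hA, B, hB, hAB⟩
    exact ⟨hA, B, F.mono hst _ hB,
      inter_eq_inter_of_subset (fun ω (h : t < e ω) => hst.trans_lt h) hAB⟩
  le' _ _ hA := hA.1

namespace MeasureTheory.Filtration.enlargementBefore

variable {F : Filtration ℝ≥0 mΩ} {e : Ω → ℝ≥0}

theorem le (t : ℝ≥0) : F t ≤ F.enlargementBefore e t :=
  fun A hA => ⟨F.le t _ hA, A, hA, rfl⟩

theorem isStoppingTime (he : Measurable e) :
    IsStoppingTime (F.enlargementBefore e) (fun ω => (e ω : WithTop ℝ≥0)) := by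
  intro t
  refine ⟨?_, ∅, @MeasurableSet.empty _ (F t), ?_⟩
  · simpa only [WithTop.coe_le_coe] using measurableSet_le he measurable_const
  · ext ω
    simp only [WithTop.coe_le_coe, mem_inter_iff, mem_ofPred_eq, empty_inter, mem_empty_iff_false,
      iff_false, not_and, not_lt, imp_self]

theorem exists_inter_gt_eq {t : ℝ≥0} {A : Set Ω}
    (hA : MeasurableSet[F.enlargementBefore e t] A) :
    ∃ B, MeasurableSet[F t] B ∧ A ∩ {ω | t < e ω} = B ∩ {ω | t < e ω} :=
  hA.2

end MeasureTheory.Filtration.enlargementBefore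

def killAt {E : Type*} (X : ℝ≥0 → Ω → E) (e : Ω → ℝ≥0) (t : ℝ≥0) (ω : Ω) : Option E :=
  if t < e ω then some (X t ω) else none

section killAt

variable {E : Type*} {X : ℝ≥0 → Ω → E} {e : Ω → ℝ≥0} {t : ℝ≥0} {ω : Ω}

@[simp]
theorem killAt_of_lt (h : t < e ω) : killAt X e t ω = some (X t ω) :=
  if_pos h

@[simp]
theorem killAt_of_le (h : e ω ≤ t) : killAt X e t ω = none :=
  if_neg h.not_gt

theorem killAt_eq_none_iff : killAt X e t ω = none ↔ e ω ≤ t := by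
  simp [killAt]

theorem measurable_killAt [MeasurableSpace E] {m : MeasurableSpace Ω} (hX : Measurable[m] (X t))
    (he : MeasurableSet[m] {ω | t < e ω}) : Measurable[m] (killAt X e t) :=
  Measurable.ite he (measurable_optionSome.comp hX) measurable_const

end killAt

section killAtEuclidean

variable {X : ℝ≥0 → Ω → Fin d → ℝ} {e : Ω → ℝ≥0} {s t : ℝ≥0} {ω : Ω}

theorem lifetime_killAt (X : ℝ≥0 → Ω → Fin d → ℝ) (e : Ω → ℝ≥0) (ω : Ω) :
    lifetime (killAt X e) ω = e ω := by
  refine le_antisymm (ENNReal.le_of_forall_pos_le_add fun ε hε _ => ?_) (le_sInf ?_)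
  · refine sInf_le ⟨e ω + ε, ⟨add_pos_of_nonneg_of_pos zero_le hε, killAt_of_le le_self_add⟩,
      ENNReal.coe_add _ _⟩
  · rintro _ ⟨s, ⟨-, hs⟩, rfl⟩
    exact ENNReal.coe_le_coe.2 (killAt_eq_none_iff.1 hs)

theorem pkPath_killAt_of_lt (h : t < e ω) : pkPath (killAt X e) ω t = X t ω := by
  simp [pkPath, h]

theorem continuousWithinAt_pkPath_killAt
    (hX : ContinuousWithinAt (fun s => X s ω) (Ici t) t) (ht : t < e ω) :
    ContinuousWithinAt (pkPath (killAt X e) ω) (Ici t) t := by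
  refine hX.congr_of_eventuallyEq ?_ (pkPath_killAt_of_lt ht)
  filter_upwards [mem_nhdsWithin_of_mem_nhds (Iio_mem_nhds ht)] with s hs
  exact pkPath_killAt_of_lt hs

theorem tendsto_pkPath_killAt {l : Fin d → ℝ}
    (hX : Tendsto (fun s => X s ω) (nhdsWithin t (Iio t)) (nhds l)) (ht : t ≤ e ω) :
    Tendsto (pkPath (killAt X e) ω) (nhdsWithin t (Iio t)) (nhds l) := by
  refine hX.congr' ?_
  filter_upwards [self_mem_nhdsWithin] with s (hs : s < t)
  exact (pkPath_killAt_of_lt (hs.trans_le ht)).symm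

theorem kval_killAt (g : (Fin d → ℝ) → ℝ≥0∞) :
    kval g (killAt X e t ω) = {ω | t < e ω}.indicator (fun ω => g (X t ω)) ω := by
  by_cases h : t < e ω <;> simp [kval, killAt, h]

theorem kval_osub_killAt (g : (Fin d → ℝ) → ℝ≥0∞) (hst : s ≤ t) :
    kval g (osub (killAt X e t ω) (killAt X e s ω))
      = {ω | t < e ω}.indicator (fun ω => g (X t ω - X s ω)) ω := by
  by_cases h : t < e ω
  · simp [kval, osub, h, hst.trans_lt h]
  · by_cases hs : s < e ω <;> simp [kval, osub, killAt, h, hs]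

end killAtEuclidean

namespace IsLevy

variable {P : Measure Ω} {F : Filtration ℝ≥0 mΩ} {e : Ω → ℝ≥0}

theorem measurable_iSup {V : Type*} [NormedAddCommGroup V] [MeasurableSpace V]
    {X : ℝ≥0 → Ω → V} (hX : IsLevy P F X) (t : ℝ≥0) : Measurable[⨆ u, F u] (X t) :=
  (hX.adapted t).mono (le_iSup (fun u => (F u : MeasurableSpace Ω)) t) le_rfl

variable {X : ℝ≥0 → Ω → Fin d → ℝ} {g : (Fin d → ℝ) → ℝ≥0∞} {s t : ℝ≥0}

theorem setLIntegral_gt_eq_mul (he : Measurable e)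
    (hind : Indep (MeasurableSpace.comap e inferInstance) (⨆ u, F u) P) (u : ℝ≥0)
    {f : Ω → ℝ≥0∞} (hf : Measurable[⨆ u, F u] f) :
    ∫⁻ ω in {ω | u < e ω}, f ω ∂P = P {ω | u < e ω} * ∫⁻ ω, f ω ∂P :=
  hind.setLIntegral_eq_mul he.comap_le (iSup_le F.le) ⟨Ioi u, measurableSet_Ioi, rfl⟩ hf

theorem lintegral_kval_killAt (hX : IsLevy P F X) (he : Measurable e)
    (hind : Indep (MeasurableSpace.comap e inferInstance) (⨆ u, F u) P) (hg : Measurable g)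
    (u : ℝ≥0) :
    ∫⁻ ω, kval g (killAt X e u ω) ∂P = P {ω | u < e ω} * ∫⁻ ω, g (X u ω) ∂P := by
  simp_rw [kval_killAt]
  rw [lintegral_indicator (measurableSet_lt measurable_const he)]
  exact setLIntegral_gt_eq_mul he hind u (hg.comp (hX.measurable_iSup u))

theorem setLIntegral_kval_osub_killAt (hX : IsLevy P F X) (he : Measurable e)
    (hind : Indep (MeasurableSpace.comap e inferInstance) (⨆ u, F u) P) (hg : Measurable g)
    (hst : s ≤ t) {A B : Set Ω} (hB : MeasurableSet[F s] B)
    (hAB : A ∩ {ω | s < e ω} = B ∩ {ω | s < e ω}) :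
    ∫⁻ ω in A, kval g (osub (killAt X e t ω) (killAt X e s ω)) ∂P
      = P {ω | t < e ω} * (P B * ∫⁻ ω, g (X (t - s) ω) ∂P) := by
  have hB' : MeasurableSet B := F.le s _ hB
  have hBF : MeasurableSet[⨆ u, F u] B := le_iSup (fun u => (F u : MeasurableSpace Ω)) s _ hB
  have hAB_t : A ∩ {ω | t < e ω} = B ∩ {ω | t < e ω} :=
    inter_eq_inter_of_subset (fun ω (h : t < e ω) => hst.trans_lt h) hAB
  have hincr : Measurable[⨆ u, F u] fun ω => g (X t ω - X s ω) :=
    hg.comp ((hX.measurable_iSup t).sub (hX.measurable_iSup s))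
  simp_rw [kval_osub_killAt g hst]
  calc ∫⁻ ω in A, {ω | t < e ω}.indicator (fun ω => g (X t ω - X s ω)) ω ∂P
      = ∫⁻ ω in {ω | t < e ω}, B.indicator (fun ω => g (X t ω - X s ω)) ω ∂P := by
        rw [lintegral_indicator (measurableSet_lt measurable_const he), lintegral_indicator hB',
          Measure.restrict_restrict (measurableSet_lt measurable_const he),
          Measure.restrict_restrict hB', inter_comm, hAB_t]
    _ = P {ω | t < e ω} * ∫⁻ ω in B, g (X t ω - X s ω) ∂P := by
        rw [setLIntegral_gt_eq_mul he hind t (hincr.indicator hBF), lintegral_indicator hB']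
    _ = P {ω | t < e ω} * (P B * ∫⁻ ω, g (X (t - s) ω) ∂P) := by
        rw [hX.increments s t hst g hg B hB]

/-- The memoryless property of `e` is what turns the survival factor `P(t < e)` of the
increment into the factor `P(s < e) P(t - s < e)` demanded by the killed process. -/
theorem increments_killAt (hX : IsLevy P F X) (he : Measurable e)
    (hind : Indep (MeasurableSpace.comap e inferInstance) (⨆ u, F u) P) (hg : Measurable g)
    (hst : s ≤ t) (hmemoryless : P {ω | t < e ω} = P {ω | s < e ω} * P {ω | t - s < e ω})
    {A B : Set Ω} (hB : MeasurableSet[F s] B) (hAB : A ∩ {ω | s < e ω} = B ∩ {ω | s < e ω}) :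
    ∫⁻ ω in A, kval g (osub (killAt X e t ω) (killAt X e s ω)) ∂P
      = P (A ∩ {ω | (s : ℝ≥0∞) < lifetime (killAt X e) ω})
        * ∫⁻ ω, kval g (killAt X e (t - s) ω) ∂P := by
  have hlife : {ω | (s : ℝ≥0∞) < lifetime (killAt X e) ω} = {ω | s < e ω} := by
    simp only [lifetime_killAt, ENNReal.coe_lt_coe]
  have hBe : P (B ∩ {ω | s < e ω}) = P {ω | s < e ω} * P B := by
    rw [inter_comm]
    exact (hind.indepSet_of_measurableSet ⟨Ioi s, measurableSet_Ioi, rfl⟩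
      (le_iSup (fun u => (F u : MeasurableSpace Ω)) s _ hB)).measure_inter_eq_mul
  rw [hX.setLIntegral_kval_osub_killAt he hind hg hst hB hAB, hX.lintegral_kval_killAt he hind hg,
    hlife, hAB, hBe, hmemoryless]
  ring

end IsLevy

/-- If `X` is an (unkilled) `ℝ^d`-valued Lévy process in `F` and `e` is an
exponential time (of some rate `r ∈ (0, ∞)`, i.e. with strictly positive mean) independent of
`F_∞`, then `X` killed at `e` is a possibly killed Lévy process in the progressive enlargement
of `F` by `e` (the smallest enlargement of `F` making `e` a stopping time). -/
theorem killed_levy_in_progressive_enlargement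
    {Ω : Type*} {mΩ : MeasurableSpace Ω} {d : ℕ}
    (P : Measure Ω) [IsProbabilityMeasure P] (F : Filtration ℝ≥0 mΩ)
    (X : ℝ≥0 → Ω → (Fin d → ℝ)) (hX : IsLevy P F X)
    (e : Ω → ℝ≥0) (hemeas : Measurable e)
    (hexp : ∃ r : ℝ≥0, 0 < r ∧ ∀ t : ℝ≥0,
      P {ω | t < e ω} = ENNReal.ofReal (Real.exp (-((r : ℝ) * t))))
    (hindep : ProbabilityTheory.Indep (MeasurableSpace.comap e inferInstance) (⨆ t, F t) P)
    (G : Filtration ℝ≥0 mΩ) (hFG : ∀ t, F t ≤ G t) (hGe : IsStoppingTime G (fun ω => (e ω : WithTop ℝ≥0)))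
    (hmin : ∀ G' : Filtration ℝ≥0 mΩ, (∀ t, F t ≤ G' t) → IsStoppingTime G' (fun ω => (e ω : WithTop ℝ≥0)) →
      ∀ t, G t ≤ G' t) :
    IsPKLevy P G (fun t ω => if t < e ω then some (X t ω) else none) := by
  obtain ⟨r, -, hre⟩ := hexp
  have he_gt : ∀ t, MeasurableSet[G t] {ω | t < e ω} := fun t => by
    simpa only [WithTop.coe_lt_coe] using hGe.measurableSet_gt t
  have hG_trace : ∀ t A, MeasurableSet[G t] A →
      ∃ B, MeasurableSet[F t] B ∧ A ∩ {ω | t < e ω} = B ∩ {ω | t < e ω} := fun t A hA =>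
    Filtration.enlargementBefore.exists_inter_gt_eq (hmin _ Filtration.enlargementBefore.le
      (Filtration.enlargementBefore.isStoppingTime hemeas) t A hA)
  have he_pos : ∀ᵐ ω ∂P, 0 < e ω := by
    refine ae_iff.2 ((prob_compl_eq_zero_iff (measurableSet_lt measurable_const hemeas)).2 ?_)
    simpa using hre 0
  change IsPKLevy P G (killAt X e)
  refine
    { adapted := fun t => measurable_killAt ((hX.adapted t).mono (hFG t) le_rfl) (he_gt t)
      dead := fun ω t h => killAt_of_le <| by rwa [lifetime_killAt, ENNReal.coe_le_coe] at h
      rightCont := fun ω t h => continuousWithinAt_pkPath_killAt (hX.rightCont ω t) <| by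
        rwa [lifetime_killAt, ENNReal.coe_lt_coe] at h
      leftLim := fun ω t ht h => (hX.leftLim ω t ht).imp fun _ hl => tendsto_pkPath_killAt hl <| by
        rwa [lifetime_killAt, ENNReal.coe_le_coe] at h
      init := by
        filter_upwards [hX.init, he_pos] with ω h0 hpos
        rw [killAt_of_lt hpos, h0]
      alive := by
        filter_upwards [he_pos] with ω h
        simpa only [lifetime_killAt, ENNReal.coe_pos] using h
      increments := fun s t hst g hg A hA => ?_ }
  obtain ⟨B, hB, hAB⟩ := hG_trace s A hA
  exact hX.increments_killAt hemeas hindep hg hst (measure_gt_eq_mul_of_exponential hre hst) hB hAB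

end
end

section
/- Let N be a homogeneous Poisson process with strictly positive rate, S its first jump time, and let 0 denote the zero process on the same probability space. Then a.s. S/2 > 0 and N agrees with the zero process on [0, S/2], yet N and the zero process do not have the same law. (Thus the stopping time hypothesis in part (i) of the main theorem is essential, since S/2 is not a stopping time.) -/
/-! Right-constancy of the paths at `0` together with `N 0 = 0` a.s. makes the first jump time `S`
a.s. positive, and `N` vanishes on `[0, S) ⊇ [0, S/2]`. The laws already differ at time `1`, where
`P (N 1 = 0) = e^{-r} < 1`. -/
open MeasureTheory ProbabilityTheory Filter Set
open scoped NNReal ENNReal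

noncomputable section

variable {Ω : Type*} {mΩ : MeasurableSpace Ω} {d : ℕ}

/-- A homogeneous Poisson process of rate `r`: an `ℕ`-valued process starting at `0` with
nondecreasing, right-constant (càdlàg) paths, stationary Poisson-distributed increments, and
independent increments. -/
def IsPoissonProcess {Ω : Type*} {mΩ : MeasurableSpace Ω} (P : Measure Ω)
    (N : ℝ≥0 → Ω → ℕ) (r : ℝ≥0) : Prop :=
  (∀ ω, Monotone fun t => N t ω) ∧
  (∀ ω (t : ℝ≥0), ∃ ε : ℝ≥0, 0 < ε ∧ ∀ s, t ≤ s → s < t + ε → N s ω = N t ω) ∧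
  (∀ᵐ ω ∂P, N 0 ω = 0) ∧
  (∀ t, Measurable (N t)) ∧
  (∀ s t : ℝ≥0, s ≤ t →
    Measure.map (fun ω => N t ω - N s ω) P = (ProbabilityTheory.poissonPMF (r * (t - s))).toMeasure) ∧
  (∀ (n : ℕ) (t : Fin (n + 1) → ℝ≥0), Monotone t →
    iIndepFun
      (fun (i : Fin n) ω => N (t i.succ) ω - N (t i.castSucc) ω) P)

def firstJumpTime (n : ℝ≥0 → ℕ) : ℝ≥0∞ :=
  sInf {t : ℝ≥0∞ | t ≠ ⊤ ∧ 1 ≤ n t.toNNReal}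

lemma eq_zero_of_lt_firstJumpTime {n : ℝ≥0 → ℕ} {t : ℝ≥0}
    (ht : (t : ℝ≥0∞) < firstJumpTime n) : n t = 0 := by
  by_contra hne
  have hle : firstJumpTime n ≤ t :=
    sInf_le ⟨ENNReal.coe_ne_top, by simpa using Nat.one_le_iff_ne_zero.mpr hne⟩
  exact hle.not_gt ht

lemma le_firstJumpTime {n : ℝ≥0 → ℕ} {ε : ℝ≥0} (h : ∀ s < ε, n s = 0) :
    (ε : ℝ≥0∞) ≤ firstJumpTime n := by
  refine le_sInf fun t ⟨ht, h1⟩ => le_of_not_gt fun hlt => ?_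
  lift t to ℝ≥0 using ht
  simp [h t (by exact_mod_cast hlt)] at h1

lemma ENNReal.coe_lt_of_le_half {a : ℝ≥0∞} (ha : a ≠ 0) {t : ℝ≥0} (ht : (t : ℝ≥0∞) ≤ a / 2) :
    (t : ℝ≥0∞) < a := by
  rcases eq_or_ne a ⊤ with rfl | ha_top
  · exact ENNReal.coe_lt_top
  · exact ht.trans_lt (ENNReal.half_lt_self ha ha_top)

namespace IsPoissonProcess

variable {P : Measure Ω} {N : ℝ≥0 → Ω → ℕ} {r : ℝ≥0}

protected lemma measurable (hN : IsPoissonProcess P N r) (t : ℝ≥0) : Measurable (N t) :=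
  hN.2.2.2.1 t

lemma ae_firstJumpTime_pos (hN : IsPoissonProcess P N r) :
    ∀ᵐ ω ∂P, 0 < firstJumpTime (fun t => N t ω) := by
  obtain ⟨-, hrc, h0, -⟩ := hN
  filter_upwards [h0] with ω h0
  obtain ⟨ε, hε, hconst⟩ := hrc ω 0
  refine (ENNReal.coe_pos.mpr hε).trans_le (le_firstJumpTime fun s hs => ?_)
  rw [hconst s zero_le (by simpa using hs), h0]

set_option linter.deprecated false in
lemma measure_eq_zero (hN : IsPoissonProcess P N r) (t : ℝ≥0) :
    P {ω | N t ω = 0} = ENNReal.ofReal (Real.exp (-(r * t))) := by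
  obtain ⟨-, -, h0, hmeas, hincr, -⟩ := hN
  have hN0 : P {ω | N t ω = 0} = P ((fun ω => N t ω - N 0 ω) ⁻¹' {0}) := by
    refine measure_congr ?_
    filter_upwards [h0] with ω h0ω
    change (N t ω = 0) = (N t ω - N 0 ω = 0)
    rw [h0ω, Nat.sub_zero]
  rw [hN0, ← Measure.map_apply (by fun_prop) (measurableSet_singleton 0),
    hincr 0 t zero_le, PMF.toMeasure_apply_singleton _ _ (measurableSet_singleton 0),
    ← poissonPMFReal_ofReal_eq_poissonPMF]
  simp [poissonPMFReal]

lemma map_ne_map_zero [IsProbabilityMeasure P] (hN : IsPoissonProcess P N r) (hr : 0 < r) :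
    Measure.map (fun ω (t : ℝ≥0) => N t ω) P ≠ Measure.map (fun (_ : Ω) (_ : ℝ≥0) => (0 : ℕ)) P := by
  have hA : MeasurableSet {f : ℝ≥0 → ℕ | f 1 = 0} :=
    measurable_pi_apply 1 (measurableSet_singleton 0)
  have hlaw : Measure.map (fun ω (t : ℝ≥0) => N t ω) P {f | f 1 = 0}
      = ENNReal.ofReal (Real.exp (-r)) := by
    rw [Measure.map_apply (measurable_pi_lambda _ hN.measurable) hA]
    simpa using hN.measure_eq_zero 1
  have hzero : Measure.map (fun (_ : Ω) (_ : ℝ≥0) => (0 : ℕ)) P {f | f 1 = 0} = 1 := by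
    simp
  intro hEq
  rw [hEq, hzero, eq_comm, ENNReal.ofReal_eq_one] at hlaw
  exact (Real.exp_lt_one_iff.mpr (neg_lt_zero.mpr hr)).ne hlaw

end IsPoissonProcess

/-- For a Poisson process `N` with rate `λ > 0` and first jump time `S`,
a.s. `S/2 > 0` and `N` agrees with the zero process on `[0, S/2]`, yet `N` and the zero
process do not have the same law (the random time `S/2` is not a stopping time). -/
theorem poisson_agrees_with_zero_before_half_first_jump
    {Ω : Type*} {mΩ : MeasurableSpace Ω}
    (P : Measure Ω) [IsProbabilityMeasure P]
    (N : ℝ≥0 → Ω → ℕ) (r : ℝ≥0) (hr : 0 < r) (hN : IsPoissonProcess P N r)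
    (S : Ω → ℝ≥0∞)
    (hS : S = fun ω => sInf {t : ℝ≥0∞ | t ≠ ⊤ ∧ 1 ≤ N t.toNNReal ω}) :
    (∀ᵐ ω ∂P, 0 < S ω / 2 ∧ ∀ t : ℝ≥0, (t : ℝ≥0∞) ≤ S ω / 2 → N t ω = 0) ∧
    Measure.map (fun ω (t : ℝ≥0) => N t ω) P
      ≠ Measure.map (fun (_ : Ω) (_ : ℝ≥0) => (0 : ℕ)) P := by
  refine ⟨?_, hN.map_ne_map_zero hr⟩
  subst hS
  filter_upwards [hN.ae_firstJumpTime_pos] with ω hpos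
  exact ⟨ENNReal.half_pos hpos.ne', fun t ht =>
    eq_zero_of_lt_firstJumpTime (ENNReal.coe_lt_of_le_half hpos.ne' ht)⟩

end
end

section
/- Let X be a killed Lévy process (lifetime ζ < ∞ a.s.) in a filtration F under P, and let S be an F-stopping time with P(S > 0) > 0. Then P(S ≥ ζ) > 0. -/
open MeasureTheory ProbabilityTheory Filter Set
open scoped NNReal ENNReal

noncomputable section

variable {Ω : Type*} {mΩ : MeasurableSpace Ω} {d : ℕ}

/-! If `S < ζ` almost surely, `S` would anticipate the killing time, which memorylessness
forbids. On the grid of mesh `h = ε / (n + 1)`, the events `{k h < S, ζ ∈ (k h, k h + h]}`,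
`k ≤ n`, are disjoint, contained in `{ζ < S + h}`, and by the Markov property at time `k h`
each has probability `P(k h < S, k h < ζ) P(ζ ≤ h) ≥ P(ε ≤ S < ζ) P(ζ ≤ h)`. Subadditivity of
`t ↦ P(ζ ≤ t)` gives `(n + 1) P(ζ ≤ h) ≥ P(ζ ≤ ε)`, hence
`P(ε ≤ S < ζ) P(ζ ≤ ε) ≤ P(ζ < S + h)`; letting `h → 0` bounds the left side by `P(ζ ≤ S)`. -/

open Function Topology

lemma measurableSet_ne_none {α : Type*} [MeasurableSpace α] :
    MeasurableSet {o : Option α | o ≠ none} :=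
  MeasurableSpace.measurableSet_comap.mpr
    ⟨(range Sum.inl)ᶜ, measurableSet_range_inl.compl, by ext o; cases o <;> simp⟩

lemma kval_one_osub {a b : Option (Fin d → ℝ)} (hab : a ≠ none → b ≠ none) :
    kval (fun _ => 1) (osub a b) = kval (fun _ => 1) a := by
  cases a <;> cases b <;> simp_all [kval, osub]

lemma lintegral_kval_one {α : Type*} [MeasurableSpace α] (μ : Measure α)
    {Y : α → Option (Fin d → ℝ)} (hY : Measurable Y) :
    ∫⁻ a, kval (fun _ => 1) (Y a) ∂μ = μ {a | Y a ≠ none} := by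
  have hmeas : MeasurableSet {a | Y a ≠ none} := hY measurableSet_ne_none
  rw [← lintegral_indicator_one hmeas]
  congr 1 with a
  cases h : Y a <;> simp [kval, h]

lemma IsStoppingTimeE.measurable {F : Filtration ℝ≥0 mΩ} {S : Ω → ℝ≥0∞}
    (hS : IsStoppingTimeE F S) : Measurable S := by
  refine measurable_of_Iic fun a => ?_
  induction a using ENNReal.recTopCoe with
  | top => simp
  | coe t => exact F.le t _ (hS t)

lemma IsStoppingTimeE.measurableSet_lt {F : Filtration ℝ≥0 mΩ} {S : Ω → ℝ≥0∞}
    (hS : IsStoppingTimeE F S) (t : ℝ≥0) : MeasurableSet[F t] {ω | (t : ℝ≥0∞) < S ω} := by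
  simpa only [compl_ofPred, not_le] using (hS t).compl

lemma exists_pos_measure_le_of_measure_pos {μ : Measure Ω} {f : Ω → ℝ≥0∞}
    (hf : 0 < μ {ω | 0 < f ω}) : ∃ ε : ℝ≥0, 0 < ε ∧ 0 < μ {ω | (ε : ℝ≥0∞) ≤ f ω} := by
  have hcover : {ω | 0 < f ω} ⊆ ⋃ n : ℕ, {ω | (((n : ℝ≥0) + 1)⁻¹ : ℝ≥0) ≤ f ω} := by
    intro ω hω
    obtain ⟨n, hn⟩ := ENNReal.exists_inv_nat_lt hω.ne'
    refine mem_iUnion.mpr ⟨n, le_of_lt (lt_of_le_of_lt ?_ hn)⟩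
    rw [ENNReal.coe_inv (by positivity)]
    gcongr
    push_cast
    exact le_self_add
  obtain ⟨n, hn⟩ := exists_measure_pos_of_not_measure_iUnion_null
    (pos_iff_ne_zero.mp (hf.trans_le (measure_mono hcover)))
  exact ⟨_, by positivity, hn⟩

lemma le_measure_setOf_le_of_tendsto {μ : Measure Ω} [IsFiniteMeasure μ] {f g : Ω → ℝ≥0∞}
    (hf : Measurable f) (hg : Measurable g) {δ : ℕ → ℝ≥0} (hδ : Antitone δ)
    (hδ0 : Tendsto δ atTop (𝓝 0)) {c : ℝ≥0∞}
    (hc : ∀ n, c ≤ μ {ω | f ω < g ω + δ n}) : c ≤ μ {ω | f ω ≤ g ω} := by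
  have hanti : Antitone fun n => {ω | f ω < g ω + δ n} :=
    fun m n hmn ω (hω : f ω < g ω + δ n) =>
      show f ω < g ω + δ m from hω.trans_le (by gcongr; exact hδ hmn)
  have hlim := tendsto_measure_iInter_atTop
    (fun n => (measurableSet_lt hf (hg.add_const _)).nullMeasurableSet) hanti
    ⟨0, measure_ne_top μ _⟩
  refine (ge_of_tendsto' hlim hc).trans (measure_mono fun ω hω => ?_)
  have hgδ : Tendsto (fun n => g ω + δ n) atTop (𝓝 (g ω)) := by
    simpa using tendsto_const_nhds.add (ENNReal.tendsto_coe.mpr hδ0)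
  exact ge_of_tendsto' hgδ fun n => (mem_iInter.mp hω n).le

namespace IsPKLevy

variable {P : Measure Ω} {F : Filtration ℝ≥0 mΩ} {X : ℝ≥0 → Ω → Option (Fin d → ℝ)}

local notation "ζ" => lifetime X

lemma measurable (hX : IsPKLevy P F X) (t : ℝ≥0) : Measurable (X t) :=
  (hX.adapted t).mono (F.le t) le_rfl

lemma ne_none_iff_lt_lifetime (hX : IsPKLevy P F X) {t : ℝ≥0} (ht : 0 < t) (ω : Ω) :
    X t ω ≠ none ↔ (t : ℝ≥0∞) < ζ ω :=
  ⟨fun h => lt_of_not_ge fun h' => h (hX.dead ω t h'),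
    fun h h' => (sInf_le ⟨t, ⟨ht, h'⟩, rfl⟩ : ζ ω ≤ t).not_gt h⟩

lemma measurable_lifetime (hX : IsPKLevy P F X) : Measurable ζ := by
  refine measurable_of_Ioi fun a => ?_
  have hrat : ζ ⁻¹' Ioi a =
      ⋃ (q : ℚ) (_ : a < Real.toNNReal q), {ω | X (Real.toNNReal q) ω ≠ none} := by
    ext ω
    simp only [mem_preimage, mem_Ioi, mem_iUnion, mem_ofPred_eq, exists_prop]
    constructor
    · intro h
      obtain ⟨q, -, haq, hqζ⟩ := ENNReal.lt_iff_exists_rat_btwn.mp h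
      exact ⟨q, haq, (hX.ne_none_iff_lt_lifetime (ENNReal.coe_pos.mp (pos_of_gt haq)) ω).mpr hqζ⟩
    · rintro ⟨q, haq, hq⟩
      exact haq.trans ((hX.ne_none_iff_lt_lifetime (ENNReal.coe_pos.mp (pos_of_gt haq)) ω).mp hq)
  rw [hrat]
  exact .iUnion fun q => .iUnion fun _ => hX.measurable _ measurableSet_ne_none

lemma measure_inter_lt_lifetime_add (hX : IsPKLevy P F X) {s h : ℝ≥0} (hh : 0 < h)
    {A : Set Ω} (hA : MeasurableSet[F s] A) :
    P (A ∩ {ω | ((s + h : ℝ≥0) : ℝ≥0∞) < ζ ω})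
      = P (A ∩ {ω | (s : ℝ≥0∞) < ζ ω}) * P {ω | (h : ℝ≥0∞) < ζ ω} := by
  have hsh : 0 < s + h := hh.trans_le le_add_self
  have halive : ∀ᵐ ω ∂P, X (s + h) ω ≠ none → X s ω ≠ none := by
    rcases eq_zero_or_pos s with rfl | hs
    · filter_upwards [hX.init] with ω h0 _
      simp [h0]
    · refine ae_of_all _ fun ω hω => (hX.ne_none_iff_lt_lifetime hs ω).mpr ?_
      exact (ENNReal.coe_lt_coe.mpr (lt_add_of_pos_right s hh)).trans
        ((hX.ne_none_iff_lt_lifetime hsh ω).mp hω)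
  have hlater : MeasurableSet {ω | X (s + h) ω ≠ none} := hX.measurable _ measurableSet_ne_none
  have hinc := hX.increments s (s + h) le_self_add (fun _ => 1) measurable_const A hA
  rw [lintegral_congr_ae (ae_restrict_of_ae (halive.mono fun ω hω => kval_one_osub hω)),
    lintegral_kval_one _ (hX.measurable _), add_tsub_cancel_left,
    lintegral_kval_one _ (hX.measurable _),
    Measure.restrict_apply hlater, inter_comm] at hinc
  simpa only [hX.ne_none_iff_lt_lifetime hsh, hX.ne_none_iff_lt_lifetime hh] using hinc

lemma measure_inter_lifetime_mem_Ioc [IsProbabilityMeasure P] (hX : IsPKLevy P F X)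
    {s h : ℝ≥0} (hh : 0 < h) {A : Set Ω} (hA : MeasurableSet[F s] A) :
    P (A ∩ {ω | (s : ℝ≥0∞) < ζ ω ∧ ζ ω ≤ (s + h : ℝ≥0)})
      = P (A ∩ {ω | (s : ℝ≥0∞) < ζ ω}) * P {ω | ζ ω ≤ h} := by
  set E := A ∩ {ω | (s : ℝ≥0∞) < ζ ω}
  have hlater : MeasurableSet {ω | ((s + h : ℝ≥0) : ℝ≥0∞) < ζ ω} :=
    hX.measurable_lifetime measurableSet_Ioi
  have hstay : E ∩ {ω | ((s + h : ℝ≥0) : ℝ≥0∞) < ζ ω}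
      = A ∩ {ω | ((s + h : ℝ≥0) : ℝ≥0∞) < ζ ω} := by
    ext ω
    simp only [E, mem_inter_iff, mem_ofPred_eq, and_assoc]
    exact and_congr_right fun _ =>
      ⟨And.right, fun hζ => ⟨(ENNReal.coe_le_coe.mpr le_self_add).trans_lt hζ, hζ⟩⟩
  have hleave : E \ {ω | ((s + h : ℝ≥0) : ℝ≥0∞) < ζ ω}
      = A ∩ {ω | (s : ℝ≥0∞) < ζ ω ∧ ζ ω ≤ (s + h : ℝ≥0)} := by
    ext ω
    simp only [E, mem_inter_iff, Set.mem_sdiff, mem_ofPred_eq, not_lt, and_assoc]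
  have hsplit := measure_inter_add_sdiff (μ := P) E hlater
  rw [hstay, hX.measure_inter_lt_lifetime_add hh hA, hleave] at hsplit
  have hone : P {ω | (h : ℝ≥0∞) < ζ ω} + P {ω | ζ ω ≤ h} = 1 := by
    have hm : MeasurableSet {ω | (h : ℝ≥0∞) < ζ ω} := hX.measurable_lifetime measurableSet_Ioi
    simpa only [compl_ofPred, not_lt, measure_univ] using measure_add_measure_compl (μ := P) hm
  have hfin : P E * P {ω | (h : ℝ≥0∞) < ζ ω} ≠ ⊤ := by finiteness
  refine (ENNReal.add_right_inj hfin).mp ?_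
  rw [hsplit, ← mul_add, hone, mul_one]

lemma measure_lifetime_le_add_le [IsProbabilityMeasure P] (hX : IsPKLevy P F X) (s : ℝ≥0)
    {h : ℝ≥0} (hh : 0 < h) :
    P {ω | ζ ω ≤ (s + h : ℝ≥0)} ≤ P {ω | ζ ω ≤ s} + P {ω | ζ ω ≤ h} :=
  calc P {ω | ζ ω ≤ (s + h : ℝ≥0)}
      ≤ P ({ω | ζ ω ≤ s} ∪ univ ∩ {ω | (s : ℝ≥0∞) < ζ ω ∧ ζ ω ≤ (s + h : ℝ≥0)}) :=
        measure_mono fun ω hω => (le_or_gt (ζ ω) s).imp id fun hs => ⟨trivial, hs, hω⟩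
    _ ≤ P {ω | ζ ω ≤ s} + P {ω | ζ ω ≤ h} := by
        refine (measure_union_le _ _).trans (add_le_add_right ?_ _)
        rw [hX.measure_inter_lifetime_mem_Ioc hh MeasurableSet.univ]
        exact mul_le_of_le_one_left' prob_le_one

lemma measure_lifetime_le_nat_mul_le [IsProbabilityMeasure P] (hX : IsPKLevy P F X)
    {h : ℝ≥0} (hh : 0 < h) (n : ℕ) :
    P {ω | ζ ω ≤ (n * h : ℝ≥0)} ≤ n * P {ω | ζ ω ≤ h} := by
  induction n with
  | zero => simpa using ae_iff.mp hX.alive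
  | succ n ih =>
    calc P {ω | ζ ω ≤ ((n + 1 : ℕ) * h : ℝ≥0)} = P {ω | ζ ω ≤ (n * h + h : ℝ≥0)} := by
          push_cast; rw [add_one_mul]
      _ ≤ P {ω | ζ ω ≤ (n * h : ℝ≥0)} + P {ω | ζ ω ≤ h} := hX.measure_lifetime_le_add_le _ hh
      _ ≤ n * P {ω | ζ ω ≤ h} + P {ω | ζ ω ≤ h} := by gcongr
      _ = (n + 1 : ℕ) * P {ω | ζ ω ≤ h} := by push_cast; ring

lemma measure_lifetime_le_pos [IsProbabilityMeasure P] (hX : IsPKLevy P F X)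
    (hkilled : ∀ᵐ ω ∂P, ζ ω < ⊤) {ε : ℝ≥0} (hε : 0 < ε) : 0 < P {ω | ζ ω ≤ ε} := by
  by_contra! hnull
  have hsurvive : ∀ n : ℕ, ∀ᵐ ω ∂P, ((n * ε : ℝ≥0) : ℝ≥0∞) < ζ ω := fun n => by
    refine ae_iff.mpr (le_antisymm ?_ zero_le)
    simpa only [not_lt, nonpos_iff_eq_zero.mp hnull, mul_zero] using
      hX.measure_lifetime_le_nat_mul_le hε n
  obtain ⟨ω, hfin, hall⟩ := (hkilled.and (ae_all_iff.mpr hsurvive)).exists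
  obtain ⟨n, hn⟩ := ENNReal.exists_nat_mul_gt (ENNReal.coe_ne_zero.mpr hε.ne') hfin.ne
  exact (hall n).not_gt (by push_cast; exact hn)

lemma mul_measure_lifetime_le_le_measure_lifetime_lt_add [IsProbabilityMeasure P]
    (hX : IsPKLevy P F X) {S : Ω → ℝ≥0∞} (hS : IsStoppingTimeE F S) {h : ℝ≥0} (hh : 0 < h)
    (n : ℕ) :
    P {ω | ((n * h : ℝ≥0) : ℝ≥0∞) ≤ S ω ∧ S ω < ζ ω} * P {ω | ζ ω ≤ (n * h : ℝ≥0)}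
      ≤ P {ω | ζ ω < S ω + h} := by
  set B : ℕ → Set Ω := fun k => {ω | ((k * h : ℝ≥0) : ℝ≥0∞) < S ω} ∩
    {ω | ((k * h : ℝ≥0) : ℝ≥0∞) < ζ ω ∧ ζ ω ≤ (k * h + h : ℝ≥0)}
  have hB : ∀ k < n, P {ω | ((n * h : ℝ≥0) : ℝ≥0∞) ≤ S ω ∧ S ω < ζ ω} * P {ω | ζ ω ≤ h}
      ≤ P (B k) := by
    intro k hk
    rw [hX.measure_inter_lifetime_mem_Ioc hh (hS.measurableSet_lt _)]
    refine mul_le_mul_left (measure_mono ?_) _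
    rintro ω ⟨hnS, hSζ⟩
    have hkn : ((k * h : ℝ≥0) : ℝ≥0∞) < (n * h : ℝ≥0) := by
      exact_mod_cast mul_lt_mul_of_pos_right (Nat.cast_lt.mpr hk) hh
    exact ⟨hkn.trans_le hnS, (hkn.trans_le hnS).trans hSζ⟩
  have hdisj : Pairwise (Disjoint on B) := by
    refine (pairwise_disjoint_on B).mpr fun j k hjk => disjoint_left.mpr fun ω hj hk => ?_
    have hjk' : ((j * h + h : ℝ≥0) : ℝ≥0∞) ≤ (k * h : ℝ≥0) := by
      rw [← add_one_mul]
      exact_mod_cast mul_le_mul_of_nonneg_right (by exact_mod_cast hjk) (zero_le : 0 ≤ h)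
    exact (hj.2.2.trans hjk').not_gt hk.2.1
  have hcover : ⋃ k ∈ Finset.range n, B k ⊆ {ω | ζ ω < S ω + h} := by
    refine iUnion₂_subset fun k _ ω hω => hω.2.2.trans_lt ?_
    rw [ENNReal.coe_add]
    exact ENNReal.add_lt_add_right ENNReal.coe_ne_top hω.1
  have hBmeas : ∀ k, MeasurableSet (B k) := fun k =>
    (F.le _ _ (hS.measurableSet_lt _)).inter
      (measurableSet_lt measurable_const hX.measurable_lifetime |>.inter
        (measurableSet_le hX.measurable_lifetime measurable_const))
  calc P {ω | ((n * h : ℝ≥0) : ℝ≥0∞) ≤ S ω ∧ S ω < ζ ω} * P {ω | ζ ω ≤ (n * h : ℝ≥0)}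
      ≤ P {ω | ((n * h : ℝ≥0) : ℝ≥0∞) ≤ S ω ∧ S ω < ζ ω} * (n * P {ω | ζ ω ≤ h}) := by
        gcongr; exact hX.measure_lifetime_le_nat_mul_le hh n
    _ = ∑ _k ∈ Finset.range n, P {ω | ((n * h : ℝ≥0) : ℝ≥0∞) ≤ S ω ∧ S ω < ζ ω}
          * P {ω | ζ ω ≤ h} := by
        rw [Finset.sum_const, Finset.card_range, nsmul_eq_mul]; ring
    _ ≤ ∑ k ∈ Finset.range n, P (B k) :=
        Finset.sum_le_sum fun k hk => hB k (Finset.mem_range.mp hk)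
    _ = P (⋃ k ∈ Finset.range n, B k) :=
        (measure_biUnion_finset (hdisj.set_pairwise _) fun k _ => hBmeas k).symm
    _ ≤ P {ω | ζ ω < S ω + h} := measure_mono hcover

lemma mul_measure_lifetime_le_le_measure_lifetime_le [IsProbabilityMeasure P]
    (hX : IsPKLevy P F X) {S : Ω → ℝ≥0∞} (hS : IsStoppingTimeE F S) {ε : ℝ≥0} (hε : 0 < ε) :
    P {ω | (ε : ℝ≥0∞) ≤ S ω ∧ S ω < ζ ω} * P {ω | ζ ω ≤ ε} ≤ P {ω | ζ ω ≤ S ω} := by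
  refine le_measure_setOf_le_of_tendsto hX.measurable_lifetime hS.measurable
    (δ := fun n : ℕ => ε / (n + 1)) (fun m n hmn => ?_) ?_ fun n => ?_
  · dsimp only
    gcongr
  · simpa [Function.comp_def] using
      (tendsto_const_div_atTop_nhds_zero_nat ε).comp (tendsto_add_atTop_nat 1)
  · have hstep : ((n + 1 : ℕ) : ℝ≥0) * (ε / (n + 1)) = ε := by
      push_cast
      exact mul_div_cancel₀ _ (by positivity)
    simpa only [hstep] using
      hX.mul_measure_lifetime_le_le_measure_lifetime_lt_add hS (by positivity : 0 < ε / (n + 1))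
        (n + 1)

end IsPKLevy

/-- If `X` is a killed Lévy process (lifetime `ζ < ∞` a.s.) and `S` is an
`F`-stopping time with `P(S > 0) > 0`, then `P(S ≥ ζ) > 0`. -/
theorem stopping_time_sees_death
    {Ω : Type*} {mΩ : MeasurableSpace Ω} {d : ℕ}
    (P : Measure Ω) [IsProbabilityMeasure P] (F : Filtration ℝ≥0 mΩ)
    (X : ℝ≥0 → Ω → Option (Fin d → ℝ)) (hX : IsPKLevy P F X)
    (hkilled : ∀ᵐ ω ∂P, lifetime X ω < ⊤)
    (S : Ω → ℝ≥0∞) (hS : IsStoppingTimeE F S)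
    (hpos : 0 < P {ω | 0 < S ω}) :
    0 < P {ω | lifetime X ω ≤ S ω} := by
  obtain ⟨ε, hε, hεS⟩ := exists_pos_measure_le_of_measure_pos hpos
  by_contra! hnull
  have hεSζ : P {ω | (ε : ℝ≥0∞) ≤ S ω} ≤ P {ω | (ε : ℝ≥0∞) ≤ S ω ∧ S ω < lifetime X ω} :=
    calc P {ω | (ε : ℝ≥0∞) ≤ S ω}
        ≤ P ({ω | (ε : ℝ≥0∞) ≤ S ω ∧ S ω < lifetime X ω} ∪ {ω | lifetime X ω ≤ S ω}) :=
          measure_mono fun ω hω => (lt_or_ge (S ω) (lifetime X ω)).imp (⟨hω, ·⟩) id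
      _ ≤ P {ω | (ε : ℝ≥0∞) ≤ S ω ∧ S ω < lifetime X ω} := by
          rw [← add_zero (P {ω | (ε : ℝ≥0∞) ≤ S ω ∧ S ω < lifetime X ω}),
            ← nonpos_iff_eq_zero.mp hnull]
          exact measure_union_le _ _
  have hprod_pos := ENNReal.mul_pos (hεS.trans_le hεSζ).ne'
    (hX.measure_lifetime_le_pos hkilled hε).ne'
  exact hnull.not_gt (hprod_pos.trans_le
    (hX.mul_measure_lifetime_le_le_measure_lifetime_le hS hε))

end
end
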